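/- Suppose β: [0,∞) → ℂ is differentiable and satisfies the ODE β' = iε(t)β + Y β^{N+1} conj(β)^N + r(t) with ε(t) real, Re Y = -κ < 0, and |r(t)| ≤ (κ/2)|β(t)|^{2N+1}. Then |β(t)|² satisfies d/dt |β|² ≤ -κ |β|^{2N+2}, and consequently |β(t)| ≤ (|β(0)|^{-2N} + κN t)^{-1/(2N)} ≤ C(1+t)^{-1/(2N)} for t ≥ 0, provided β(t) ≠ 0 for all t. -/

import Mathlib

/-!
Pairing the equation with `β`, the rotation term `I ε β` drops out, the resonant term contributes
`Re Y · |β|^{2N+2} = -κ |β|^{2N+2}`, and the remainder gives back at most half of that; hence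
`d/dt |β|² ≤ -κ |β|^{2N+2}`. For `u = |β|²` this reads `u' ≤ -κ u^{N+1}`, so
`(u^{-N})' = -N u^{-N-1} u' ≥ κ N`, i.e. `|β(t)|^{-2N} ≥ |β(0)|^{-2N} + κ N t`.
-/

open Complex ComplexConjugate Set
open scoped InnerProductSpace

namespace Complex

theorem real_inner_I_mul_ofReal_mul_self (z : ℂ) (c : ℝ) : ⟪z, I * c * z⟫_ℝ = 0 := by
  rw [Complex.inner, mul_assoc, mul_conj]
  simp

theorem real_inner_mul_pow_succ_mul_conj_pow (z Y : ℂ) (N : ℕ) :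
    ⟪z, Y * z ^ (N + 1) * conj z ^ N⟫_ℝ = Y.re * ‖z‖ ^ (2 * N + 2) := by
  have h : Y * z ^ (N + 1) * conj z ^ N * conj z = Y * ((‖z‖ ^ (2 * N + 2) : ℝ) : ℂ) := by
    rw [show 2 * N + 2 = 2 * (N + 1) by ring, pow_mul, ← normSq_eq_norm_sq]
    push_cast [← mul_conj]
    ring
  rw [Complex.inner, h, re_mul_ofReal]

end Complex

theorem two_real_inner_normalForm_le {z Y ρ : ℂ} {κ : ℝ} (c : ℝ) (N : ℕ) (hY : Y.re = -κ)
    (hρ : ‖ρ‖ ≤ κ / 2 * ‖z‖ ^ (2 * N + 1)) :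
    2 * ⟪z, I * c * z + Y * z ^ (N + 1) * conj z ^ N + ρ⟫_ℝ ≤ -κ * ‖z‖ ^ (2 * N + 2) := by
  have hρ' : ⟪z, ρ⟫_ℝ ≤ κ / 2 * ‖z‖ ^ (2 * N + 2) :=
    calc ⟪z, ρ⟫_ℝ ≤ ‖z‖ * ‖ρ‖ := real_inner_le_norm z ρ
      _ ≤ ‖z‖ * (κ / 2 * ‖z‖ ^ (2 * N + 1)) := by gcongr
      _ = κ / 2 * ‖z‖ ^ (2 * N + 2) := by ring
  rw [inner_add_right, inner_add_right, real_inner_I_mul_ofReal_mul_self,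
    real_inner_mul_pow_succ_mul_conj_pow, hY]
  linarith

theorem inv_pow_add_mul_le_of_deriv_le {u : ℝ → ℝ} {a : ℝ} (N : ℕ)
    (hu : ∀ t, 0 ≤ t → DifferentiableAt ℝ u t) (hpos : ∀ t, 0 ≤ t → 0 < u t)
    (hbound : ∀ t, 0 < t → deriv u t ≤ -a * u t ^ (N + 1)) {t : ℝ} (ht : 0 ≤ t) :
    (u 0 ^ N)⁻¹ + a * N * t ≤ (u t ^ N)⁻¹ := by
  set g : ℝ → ℝ := fun s => u s ^ (-(N : ℤ)) - a * N * s
  have hg : ∀ s, 0 ≤ s → HasDerivAt g (-N * u s ^ (-(N : ℤ) - 1) * deriv u s - a * N) s := by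
    intro s hs
    have hzpow := (hasDerivAt_zpow (-(N : ℤ)) (u s) (.inl (hpos s hs).ne')).comp s
      (hu s hs).hasDerivAt
    exact (hzpow.sub ((hasDerivAt_id s).const_mul (a * N))).congr_deriv (by push_cast; ring)
  have hmono : MonotoneOn g (Ici 0) := by
    refine monotoneOn_of_hasDerivWithinAt_nonneg (convex_Ici 0)
      (fun s hs => (hg s hs).continuousAt.continuousWithinAt)
      (fun s hs => (hg s (le_of_lt (by simpa using hs))).hasDerivWithinAt) ?_
    intro s hs
    rw [interior_Ici] at hs
    have hus := hpos s (le_of_lt hs)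
    have hcancel : u s ^ (-(N : ℤ) - 1) * u s ^ (N + 1) = 1 := by
      rw [← zpow_natCast, ← zpow_add₀ hus.ne']
      simp
    have hcoef : -(N : ℝ) * u s ^ (-(N : ℤ) - 1) ≤ 0 :=
      mul_nonpos_of_nonpos_of_nonneg (by simp) (zpow_pos hus _).le
    calc (0 : ℝ) = -N * u s ^ (-(N : ℤ) - 1) * (-a * u s ^ (N + 1)) - a * N := by
          linear_combination (-(a * N)) * hcancel
      _ ≤ -N * u s ^ (-(N : ℤ) - 1) * deriv u s - a * N := by
          gcongr ?_ - _
          exact mul_le_mul_of_nonpos_left (hbound s hs) hcoef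
  have := hmono self_mem_Ici ht ht
  simp only [g, zpow_neg, zpow_natCast] at this
  linarith

theorem le_rpow_neg_one_div_of_le_inv_pow {x A : ℝ} {n : ℕ} (hx : 0 < x) (hA : 0 < A)
    (hn : n ≠ 0) (h : A ≤ (x ^ n)⁻¹) : x ≤ A ^ (-1 / (n : ℝ)) := by
  have hxn : x ^ (n : ℝ) ≤ A⁻¹ := by
    rw [Real.rpow_natCast]
    exact (le_inv_comm₀ hA (by positivity)).mp h
  rw [neg_div, Real.rpow_neg hA.le, ← Real.inv_rpow hA.le, one_div]
  exact (Real.le_rpow_inv_iff_of_pos hx.le (inv_nonneg.mpr hA.le) (by positivity)).mpr hxn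

theorem exists_rpow_add_mul_le_mul_one_add_rpow {a b q : ℝ} (ha : 0 < a) (hb : 0 < b)
    (hq : q ≤ 0) : ∃ C : ℝ, 0 < C ∧ ∀ t, 0 ≤ t → (a + b * t) ^ q ≤ C * (1 + t) ^ q := by
  have hc : 0 < min a b := lt_min ha hb
  refine ⟨min a b ^ q, Real.rpow_pos_of_pos hc q, fun t ht => ?_⟩
  have hle : min a b * (1 + t) ≤ a + b * t := by
    nlinarith [min_le_left a b, min_le_right a b]
  calc (a + b * t) ^ q ≤ (min a b * (1 + t)) ^ q :=
        Real.rpow_le_rpow_of_nonpos (by positivity) hle hq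
    _ = min a b ^ q * (1 + t) ^ q := Real.mul_rpow hc.le (by positivity)

theorem stmt18 (N : ℕ) (hN : 1 ≤ N) (Y : ℂ) (κ : ℝ) (hκ : 0 < κ) (hY : Y.re = -κ)
    (ε : ℝ → ℝ) (r : ℝ → ℂ) (β : ℝ → ℂ) (hβdiff : Differentiable ℝ β)
    (hr : ∀ t, 0 ≤ t → ‖r t‖ ≤ (κ / 2) * ‖β t‖ ^ (2 * N + 1))
    (hode : ∀ t, 0 ≤ t → deriv β t
      = Complex.I * (ε t : ℂ) * β t + Y * (β t) ^ (N + 1) * (starRingEnd ℂ (β t)) ^ N + r t)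
    (hnz : ∀ t, 0 ≤ t → β t ≠ 0) :
    (∀ t, 0 ≤ t → deriv (fun s => ‖β s‖ ^ 2) t ≤ -κ * ‖β t‖ ^ (2 * N + 2))
    ∧ (∀ t, 0 ≤ t →
        ‖β t‖ ≤ ((‖β 0‖ ^ (2 * N))⁻¹ + κ * N * t) ^ (-(1 : ℝ) / (2 * N)))
    ∧ (∃ Cb : ℝ, 0 < Cb ∧ ∀ t, 0 ≤ t →
        ‖β t‖ ≤ Cb * (1 + t) ^ (-(1 : ℝ) / (2 * N))) := by
  have hderiv : ∀ t, HasDerivAt (fun s => ‖β s‖ ^ 2) (2 * ⟪β t, deriv β t⟫_ℝ) t :=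
    fun t => (hβdiff t).hasDerivAt.norm_sq
  have hdissip : ∀ t, 0 ≤ t → deriv (fun s => ‖β s‖ ^ 2) t ≤ -κ * ‖β t‖ ^ (2 * N + 2) := by
    intro t ht
    rw [(hderiv t).deriv, hode t ht]
    exact two_real_inner_normalForm_le (ε t) N hY (hr t ht)
  have hb0 : 0 < ‖β 0‖ := norm_pos_iff.mpr (hnz 0 le_rfl)
  have hdecay : ∀ t, 0 ≤ t →
      ‖β t‖ ≤ ((‖β 0‖ ^ (2 * N))⁻¹ + κ * N * t) ^ (-(1 : ℝ) / (2 * N)) := by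
    intro t ht
    have hcomp := inv_pow_add_mul_le_of_deriv_le (u := fun s => ‖β s‖ ^ 2) N
      (fun s _ => (hderiv s).differentiableAt)
      (fun s hs => pow_pos (norm_pos_iff.mpr (hnz s hs)) 2)
      (fun s hs => by
        simpa only [← pow_mul, show 2 * (N + 1) = 2 * N + 2 by ring] using hdissip s hs.le) ht
    simp only [← pow_mul] at hcomp
    have h := le_rpow_neg_one_div_of_le_inv_pow (norm_pos_iff.mpr (hnz t ht))
      (by positivity) (by omega) hcomp
    rwa [Nat.cast_mul, Nat.cast_ofNat] at h
  obtain ⟨C, hC, hCbound⟩ := exists_rpow_add_mul_le_mul_one_add_rpow (q := -(1 : ℝ) / (2 * N))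
    (inv_pos.mpr (pow_pos hb0 (2 * N))) (by positivity : 0 < κ * N)
    (div_nonpos_of_nonpos_of_nonneg (by norm_num) (by positivity))
  exact ⟨hdissip, hdecay, C, hC, fun t ht => (hdecay t ht).trans (hCbound t ht)⟩
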